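/- van Benthem-style characterization of WAML^n: a first-order L¹_n-formula α(x) is invariant under wa^n-bisimulation (over all n-models) if and only if there is a WAML formula φ such that α(x) and ST_x(φ) are equivalent over all n-models (i.e., for every n-model M and world w, M ⊨ α[w] iff M ⊨ ST_x(φ)[w]). -/

import Mathlib

namespace WAML

/-- The language of WAML: atoms, negation, conjunction, and the (diagonal) box. -/
inductive Formula : Type
  | atom : ℕ → Formula
  | neg : Formula → Formula
  | and : Formula → Formula → Formula
  | box : Formula → Formula

namespace Formula

def imp (φ ψ : Formula) : Formula := neg (and φ (neg ψ))
def or (φ ψ : Formula) : Formula := neg (and (neg φ) (neg ψ))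
def dia (φ : Formula) : Formula := neg (box (neg φ))
def bot : Formula := and (atom 0) (neg (atom 0))

/-- The set of propositional letters occurring in a formula. -/
def letters : Formula → Set ℕ
  | atom p => {p}
  | neg φ => letters φ
  | and φ ψ => letters φ ∪ letters ψ
  | box φ => letters φ

end Formula

/-- Conjunction of a list of formulas. -/
def conjList : List Formula → Formula
  | [] => Formula.neg Formula.bot
  | [φ] => φ
  | φ :: ψ :: rest => Formula.and φ (conjList (ψ :: rest))

/-- Disjunction of a list of formulas. -/
def disjList : List Formula → Formula
  | [] => Formula.bot
  | [φ] => φ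
  | φ :: ψ :: rest => Formula.or φ (disjList (ψ :: rest))

/-- ⋁_{0 ≤ i < j ≤ n} (φ_i ∧ φ_j) -/
def pairDisj (n : ℕ) (φ : Fin (n+1) → Formula) : Formula :=
  disjList (((List.finRange (n+1)).product (List.finRange (n+1))).filterMap
    (fun p => if p.1 < p.2 then some (Formula.and (φ p.1) (φ p.2)) else none))

/-- The axiom (scheme) K_n : □φ₀ ∧ ⋯ ∧ □φ_n → □⋁_{0 ≤ i < j ≤ n} (φ_i ∧ φ_j). -/
def KnAxiom (n : ℕ) (φ : Fin (n+1) → Formula) : Formula :=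
  Formula.imp (conjList ((List.finRange (n+1)).map (fun i => Formula.box (φ i))))
    (Formula.box (pairDisj n φ))

/-- A propositional tautology (including all substitution instances): a formula true under
every valuation of formulas respecting ¬ and ∧. -/
def Tautology (φ : Formula) : Prop :=
  ∀ v : Formula → Prop,
    (∀ ψ, v (Formula.neg ψ) ↔ ¬ v ψ) →
    (∀ ψ χ, v (Formula.and ψ χ) ↔ v ψ ∧ v χ) →
    v φ

/-- The proof system 𝕂_n: propositional tautologies, K_n, modus ponens, necessitation, RM. -/
inductive KProof (n : ℕ) : Formula → Prop
  | taut {φ} : Tautology φ → KProof n φ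
  | kn (φ : Fin (n+1) → Formula) : KProof n (KnAxiom n φ)
  | mp {φ ψ} : KProof n (Formula.imp φ ψ) → KProof n φ → KProof n ψ
  | nec {φ} : KProof n φ → KProof n (Formula.box φ)
  | rm {φ ψ} : KProof n (Formula.imp φ ψ) →
      KProof n (Formula.imp (Formula.box φ) (Formula.box ψ))

/-- An n-model: a nonempty set of worlds, an (n+1)-ary relation, a valuation. -/
structure NModel (n : ℕ) where
  World : Type
  nonempty : Nonempty World
  R : World → (Fin n → World) → Prop
  V : World → ℕ → Prop

/-- Diagonal semantics. -/
def Sat {n : ℕ} (M : NModel n) : M.World → Formula → Prop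
  | w, .atom p => M.V w p
  | w, .neg φ => ¬ Sat M w φ
  | w, .and φ ψ => Sat M w φ ∧ Sat M w ψ
  | w, .box φ => ∀ v : Fin n → M.World, M.R w v → ∃ i, Sat M (v i) φ

/-- wa^n-bisimulation between two n-models. -/
def IsBisim {n : ℕ} (M M' : NModel n) (Z : M.World → M'.World → Prop) : Prop :=
  (∃ w w', Z w w') ∧
  (∀ w w', Z w w' → ∀ p, M.V w p ↔ M'.V w' p) ∧
  (∀ w w' (v : Fin n → M.World), Z w w' → M.R w v →
    ∃ v' : Fin n → M'.World, M'.R w' v' ∧ ∀ j, ∃ i, Z (v i) (v' j)) ∧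
  (∀ w w' (v' : Fin n → M'.World), Z w w' → M'.R w' v' →
    ∃ v : Fin n → M.World, M.R w v ∧ ∀ i, ∃ j, Z (v i) (v' j))

/-- wa^n-bisimilarity of pointed n-models. -/
def Bisimilar {n : ℕ} (M M' : NModel n) (w : M.World) (w' : M'.World) : Prop :=
  ∃ Z, IsBisim M M' Z ∧ Z w w'

/-- Image-finiteness: each world has finitely many successor n-tuples. -/
def ImageFinite {n : ℕ} (M : NModel n) : Prop :=
  ∀ w : M.World, {v : Fin n → M.World | M.R w v}.Finite

/-- First-order correspondence language L¹_n: formulas with free variables among Fin k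
(de Bruijn style, `all` binds the last variable). -/
inductive FO (n : ℕ) : ℕ → Type
  | pred {k} : ℕ → Fin k → FO n k
  | rel {k} : (Fin (n+1) → Fin k) → FO n k
  | eq {k} : Fin k → Fin k → FO n k
  | fal {k} : FO n k
  | not {k} : FO n k → FO n k
  | and {k} : FO n k → FO n k → FO n k
  | or {k} : FO n k → FO n k → FO n k
  | imp {k} : FO n k → FO n k → FO n k
  | all {k} : FO n (k+1) → FO n k

/-- Realization of first-order formulas in an n-model (seen as an L¹_n-structure). -/
def FO.Realize {n : ℕ} (M : NModel n) : ∀ {k}, FO n k → (Fin k → M.World) → Prop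
  | _, .pred p x, a => M.V (a x) p
  | _, .rel ts, a => M.R (a (ts 0)) (fun i => a (ts i.succ))
  | _, .eq x y, a => a x = a y
  | _, .fal, _ => False
  | _, .not φ, a => ¬ FO.Realize M φ a
  | _, .and φ ψ, a => FO.Realize M φ a ∧ FO.Realize M ψ a
  | _, .or φ ψ, a => FO.Realize M φ a ∨ FO.Realize M ψ a
  | _, .imp φ ψ, a => FO.Realize M φ a → FO.Realize M ψ a
  | _, .all φ, a => ∀ x, FO.Realize M φ (Fin.snoc a x)

/-- Quantifier rank. -/
def FO.qr {n : ℕ} : ∀ {k}, FO n k → ℕ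
  | _, .pred _ _ => 0
  | _, .rel _ => 0
  | _, .eq _ _ => 0
  | _, .fal => 0
  | _, .not φ => φ.qr
  | _, .and φ ψ => max φ.qr ψ.qr
  | _, .or φ ψ => max φ.qr ψ.qr
  | _, .imp φ ψ => max φ.qr ψ.qr
  | _, .all φ => φ.qr + 1

/-- Renaming of free variables. -/
def FO.rename {n : ℕ} : ∀ {k k'}, (Fin k → Fin k') → FO n k → FO n k'
  | _, _, f, .pred p x => .pred p (f x)
  | _, _, f, .rel ts => .rel (fun i => f (ts i))
  | _, _, f, .eq x y => .eq (f x) (f y)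
  | _, _, _, .fal => .fal
  | _, _, f, .not φ => .not (φ.rename f)
  | _, _, f, .and φ ψ => .and (φ.rename f) (ψ.rename f)
  | _, _, f, .or φ ψ => .or (φ.rename f) (ψ.rename f)
  | _, _, f, .imp φ ψ => .imp (φ.rename f) (ψ.rename f)
  | _, _, f, .all φ =>
      .all (φ.rename (fun j => Fin.lastCases (Fin.last _) (fun a => (f a).castSucc) j))

/-- A block of m universal quantifiers (binding the last m variables). -/
def FO.alls {n k : ℕ} : ∀ (m : ℕ), FO n (k + m) → FO n k
  | 0, φ => φ
  | m+1, φ => FO.alls m φ.all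

/-- Disjunction of a list of first-order formulas. -/
def FO.disjList {n k : ℕ} : List (FO n k) → FO n k
  | [] => .fal
  | [φ] => φ
  | φ :: ψ :: rest => .or φ (FO.disjList (ψ :: rest))

/-- The standard translation ST_x (with x the unique free variable). -/
def ST (n : ℕ) : Formula → FO n 1
  | .atom p => .pred p 0
  | .neg φ => .not (ST n φ)
  | .and φ ψ => .and (ST n φ) (ST n ψ)
  | .box φ =>
      let ψ := ST n φ
      FO.alls n (FO.imp
        (.rel (Fin.cases (Fin.castAdd n (0 : Fin 1)) (fun i => Fin.natAdd 1 i)))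
        (FO.disjList ((List.finRange n).map
          (fun i => ψ.rename (fun _ => Fin.natAdd 1 i)))))

/-- α(x) (one free variable) is invariant under wa^n-bisimulation. -/
def BisimInvariant (n : ℕ) (α : FO n 1) : Prop :=
  ∀ (M N : NModel n) (Z : M.World → N.World → Prop) (w : M.World) (v : N.World),
    IsBisim M N Z → Z w v →
    (FO.Realize M α (fun _ => w) ↔ FO.Realize N α (fun _ => v))

/-- α(x) is invariant under wa^n-bisimulation between finite n-models. -/
def BisimInvariantFin (n : ℕ) (α : FO n 1) : Prop :=
  ∀ (M N : NModel n) (Z : M.World → N.World → Prop) (w : M.World) (v : N.World),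
    Finite M.World → Finite N.World → IsBisim M N Z → Z w v →
    (FO.Realize M α (fun _ => w) ↔ FO.Realize N α (fun _ => v))

/-- Admissible sequences for the unraveling of M around w. The first entry is
((w,…,w), 1) (index 0 in 0-based counting) and consecutive entries are related by R. -/
def GoodSeq {n : ℕ} [NeZero n] (M : NModel n) (w : M.World)
    (s : List ((Fin n → M.World) × Fin n)) : Prop :=
  (∃ rest, s = ((fun _ => w), (0 : Fin n)) :: rest) ∧
  List.Chain' (fun a b => M.R (a.1 a.2) b.1) s

/-- The world of M corresponding to a sequence: v⃗_m[i_m] (and w for the empty list). -/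
def rmap {n : ℕ} (M : NModel n) (w : M.World)
    (s : List ((Fin n → M.World) × Fin n)) : M.World :=
  match s.getLast? with
  | some a => a.1 a.2
  | none => w

/-- The unraveling M_w of M around w. -/
def Unravel {n : ℕ} [NeZero n] (M : NModel n) (w : M.World) : NModel n where
  World := { s : List ((Fin n → M.World) × Fin n) // GoodSeq M w s }
  nonempty := ⟨⟨[((fun _ => w), 0)], ⟨⟨[], rfl⟩, List.isChain_singleton _⟩⟩⟩
  R := fun s₀ t =>
    M.R (rmap M w s₀.val) (fun i => rmap M w (t i).val) ∧
    ∀ i, ∃ a, (t i).val = s₀.val ++ [a]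
  V := fun s p => M.V (rmap M w s.val) p

/-- The root ⟨((w,…,w),1)⟩ of the unraveling. -/
def unravelRoot {n : ℕ} [NeZero n] (M : NModel n) (w : M.World) :
    (Unravel M w).World :=
  ⟨[((fun _ => w), 0)], ⟨⟨[], rfl⟩, List.isChain_singleton _⟩⟩

/-- The bounded unraveling M_w|_l : the submodel of M_w of worlds of level at most l. -/
def UnravelB {n : ℕ} [NeZero n] (M : NModel n) (w : M.World) (l : ℕ) : NModel n where
  World := { s : List ((Fin n → M.World) × Fin n) // GoodSeq M w s ∧ s.length ≤ l + 1 }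
  nonempty := ⟨⟨[((fun _ => w), 0)], ⟨⟨⟨[], rfl⟩, List.isChain_singleton _⟩, by simp⟩⟩⟩
  R := fun s₀ t =>
    M.R (rmap M w s₀.val) (fun i => rmap M w (t i).val) ∧
    ∀ i, ∃ a, (t i).val = s₀.val ++ [a]
  V := fun s p => M.V (rmap M w s.val) p

/-- The root of the bounded unraveling. -/
def unravelBRoot {n : ℕ} [NeZero n] (M : NModel n) (w : M.World) (l : ℕ) :
    (UnravelB M w l).World :=
  ⟨[((fun _ => w), 0)], ⟨⟨⟨[], rfl⟩, List.isChain_singleton _⟩, by simp⟩⟩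

/-- R^c x y : y is a member of some successor tuple of x. -/
def Rc {n : ℕ} (M : NModel n) (x y : M.World) : Prop :=
  ∃ v : Fin n → M.World, M.R x v ∧ ∃ i, y = v i

/-- The undirected edge relation induced by R^c. -/
def Edge {n : ℕ} (M : NModel n) (x y : M.World) : Prop := Rc M x y ∨ Rc M y x

/-- There is an undirected R^c-path of length m from x to y. -/
def HasPath {n : ℕ} (M : NModel n) (x y : M.World) (m : ℕ) : Prop :=
  ∃ f : ℕ → M.World, f 0 = x ∧ f m = y ∧ ∀ i < m, Edge M (f i) (f (i+1))

/-- The distance between worlds, in ℕ ∪ {ω} (ω = ⊤ if there is no path). -/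
noncomputable def dist {n : ℕ} (M : NModel n) (x y : M.World) : ℕ∞ :=
  sInf {c : ℕ∞ | ∃ m : ℕ, c = (m : ℕ∞) ∧ HasPath M x y m}

/-- One literal among the letters r₁,…,r_m, i.e. the atoms 2,…,m+1. -/
def IsLit (m : ℕ) (φ : Formula) : Prop :=
  ∃ j, j < m ∧ (φ = Formula.atom (j+2) ∨ φ = Formula.neg (Formula.atom (j+2)))

/-- A conjunction of literals over the letters r₁,…,r_m. -/
inductive IsConjLits (m : ℕ) : Formula → Prop
  | lit {φ} : IsLit m φ → IsConjLits m φ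
  | conj {φ ψ} : IsConjLits m φ → IsConjLits m ψ → IsConjLits m (Formula.and φ ψ)

/-- The Craig Interpolation Property for 𝕂_n. -/
def HasCIP (n : ℕ) : Prop :=
  ∀ φ ψ : Formula, KProof n (φ.imp ψ) →
    ∃ γ : Formula, γ.letters ⊆ φ.letters ∩ ψ.letters ∧
      KProof n (φ.imp γ) ∧ KProof n (γ.imp ψ)



/-!
One direction is the invariance of modal formulas under wa-bisimulation. For the other, let `Γ`
be the set of modal consequences of a bisimulation-invariant `α`. If `(N, v)` satisfies `Γ`, then
every finite part of the modal theory of `(N, v)` is satisfiable together with `α`; by Łoś's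
theorem a nonprincipal ultraproduct of such witnesses satisfies `α` and is modally equivalent to
`(N, v)`, hence to the ultrapower of `(N, v)`. Countable saturation of nonprincipal ultraproducts
over `ℕ` makes modal equivalence between them a wa-bisimulation (Hennessy–Milner), so `α` moves
to the ultrapower of `N` and, by Łoś again, to `(N, v)`. So `Γ` entails `α`, and a second
ultraproduct argument (compactness) shows that a finite conjunction of `Γ` already does.
-/

open FirstOrder Filter

instance {n : ℕ} (M : NModel n) : Nonempty M.World := M.nonempty

section Semantics

variable {n : ℕ} (M : NModel n) (w : M.World)

theorem sat_or (φ ψ : Formula) : Sat M w (φ.or ψ) ↔ Sat M w φ ∨ Sat M w ψ := by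
  simp only [Formula.or, Sat]
  tauto

theorem sat_dia (φ : Formula) :
    Sat M w φ.dia ↔ ∃ v : Fin n → M.World, M.R w v ∧ ∀ i, Sat M (v i) φ := by
  simp [Formula.dia, Sat]

theorem sat_conjList (l : List Formula) : Sat M w (conjList l) ↔ ∀ φ ∈ l, Sat M w φ := by
  induction l using conjList.induct <;> simp_all [conjList, Sat, Formula.bot]

theorem sat_disjList (l : List Formula) : Sat M w (disjList l) ↔ ∃ φ ∈ l, Sat M w φ := by
  induction l using disjList.induct <;> simp_all [disjList, sat_or, Sat, Formula.bot]

end Semantics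

theorem sat_iff_of_isBisim {n : ℕ} {M N : NModel n} {Z : M.World → N.World → Prop}
    (hZ : IsBisim M N Z) (φ : Formula) {w : M.World} {v : N.World} (hwv : Z w v) :
    Sat M w φ ↔ Sat N v φ := by
  obtain ⟨-, hV, hforth, hback⟩ := hZ
  induction φ generalizing w v with
  | atom p => exact hV w v hwv p
  | neg φ ih => exact not_congr (ih hwv)
  | and φ ψ ih₁ ih₂ => exact and_congr (ih₁ hwv) (ih₂ hwv)
  | box φ ih =>
    constructor
    · intro hbox t ht
      obtain ⟨s, hs, hst⟩ := hback w v t hwv ht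
      obtain ⟨i, hi⟩ := hbox s hs
      obtain ⟨j, hj⟩ := hst i
      exact ⟨j, (ih hj).1 hi⟩
    · intro hbox s hs
      obtain ⟨t, ht, hst⟩ := hforth w v s hwv hs
      obtain ⟨j, hj⟩ := hbox t ht
      obtain ⟨i, hi⟩ := hst j
      exact ⟨i, (ih hi).2 hj⟩

section StandardTranslation

variable {n : ℕ} (M : NModel n)

theorem FO.realize_rename {k k' : ℕ} (φ : FO n k) (f : Fin k → Fin k')
    (a : Fin k' → M.World) : FO.Realize M (φ.rename f) a ↔ FO.Realize M φ (a ∘ f) := by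
  induction φ generalizing k' with
  | all φ ih =>
    have snoc_comp (x : M.World) :
        Fin.snoc a x ∘ Fin.lastCases (Fin.last _) (fun b => (f b).castSucc) =
          Fin.snoc (a ∘ f) x := by
      funext j
      induction j using Fin.lastCases <;> simp
    simp only [FO.rename, FO.Realize, ih, snoc_comp]
  | _ => simp_all [FO.rename, FO.Realize]

theorem FO.realize_alls {k : ℕ} (m : ℕ) (φ : FO n (k + m)) (a : Fin k → M.World) :
    FO.Realize M (FO.alls m φ) a ↔
      ∀ g : Fin m → M.World, FO.Realize M φ (Fin.append a g) := by
  induction m with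
  | zero => simp [FO.alls, Fin.append_right_nil]
  | succ m ih =>
    simp only [FO.alls, ih, FO.Realize, ← Fin.append_snoc]
    exact ⟨fun h g => Fin.snoc_init_self g ▸ h (Fin.init g) (g (Fin.last m)),
      fun h g x => h (Fin.snoc g x)⟩

theorem FO.realize_disjList {k : ℕ} (l : List (FO n k)) (a : Fin k → M.World) :
    FO.Realize M (FO.disjList l) a ↔ ∃ φ ∈ l, FO.Realize M φ a := by
  induction l using FO.disjList.induct <;> simp_all [FO.disjList, FO.Realize]

theorem realize_ST (w : M.World) (φ : Formula) :
    FO.Realize M (ST n φ) (fun _ => w) ↔ Sat M w φ := by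
  induction φ generalizing w with
  | box φ ih =>
    simp only [ST, FO.realize_alls, FO.Realize, FO.realize_disjList]
    simp [FO.realize_rename, Function.comp_def, Fin.append_left, Fin.append_right, ih, Sat]
  | _ => simp_all [ST, FO.Realize, Sat]

end StandardTranslation

section Ultraproduct

inductive FO.RelSymbol (n : ℕ) : ℕ → Type
  | pred : ℕ → FO.RelSymbol n 1
  | R : FO.RelSymbol n (n + 1)

def FO.language (n : ℕ) : Language := ⟨fun _ => Empty, FO.RelSymbol n⟩

variable {n : ℕ}

instance NModel.instStructure (M : NModel n) : (FO.language n).Structure M.World where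
  funMap f := Empty.elim f
  RelMap
    | .pred p, xs => M.V (xs 0) p
    | .R, xs => M.R (xs 0) (Fin.tail xs)

def FO.toBoundedFormula : ∀ {k}, FO n k → (FO.language n).BoundedFormula Empty k
  | _, .pred p x =>
    Language.Relations.boundedFormula₁ (L := FO.language n) (.pred p) (.var (.inr x))
  | _, .rel ts =>
    Language.Relations.boundedFormula (L := FO.language n) .R fun i => .var (.inr (ts i))
  | _, .eq x y => Language.Term.bdEqual (.var (.inr x)) (.var (.inr y))
  | _, .fal => ⊥
  | _, .not φ => φ.toBoundedFormula.not
  | _, .and φ ψ => φ.toBoundedFormula ⊓ ψ.toBoundedFormula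
  | _, .or φ ψ => φ.toBoundedFormula ⊔ ψ.toBoundedFormula
  | _, .imp φ ψ => φ.toBoundedFormula.imp ψ.toBoundedFormula
  | _, .all φ => φ.toBoundedFormula.all

theorem FO.realize_toBoundedFormula (M : NModel n) {k : ℕ} (φ : FO n k) (v : Empty → M.World)
    (a : Fin k → M.World) : φ.toBoundedFormula.Realize v a ↔ FO.Realize M φ a := by
  induction φ with
  | pred | rel => rfl
  | _ => simp_all [FO.toBoundedFormula, FO.Realize]

variable {ι : Type} (U : Ultrafilter ι) (Ms : ι → NModel n)

def UProd : NModel n where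
  World := (U : Filter ι).Product fun i => (Ms i).World
  nonempty := inferInstance
  R w v := Language.Structure.RelMap (L := FO.language n) FO.RelSymbol.R (Fin.cons w v)
  V w p := Language.Structure.RelMap (L := FO.language n) (FO.RelSymbol.pred p) ![w]

def UProd.mk (f : ∀ i, (Ms i).World) : (UProd U Ms).World := (f : (U : Filter ι).Product _)

theorem UProd.mk_surjective : Function.Surjective (UProd.mk U Ms) :=
  fun x => Quotient.exists_rep x

def UProd.equivProduct :
    (UProd U Ms).World ≃[FO.language n] (U : Filter ι).Product fun i => (Ms i).World where
  toEquiv := Equiv.refl _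
  map_fun' f := Empty.elim f
  map_rel'
    | .pred p, x => (congrArg (Language.Structure.RelMap (L := FO.language n)
        (M := (U : Filter ι).Product fun i => (Ms i).World) (.pred p))
        (funext (Fin.forall_fin_one.2 rfl) : ![x 0] = x)).to_iff.symm
    | .R, x => (congrArg (Language.Structure.RelMap (L := FO.language n)
        (M := (U : Filter ι).Product fun i => (Ms i).World) .R)
        (Fin.cons_self_tail x)).to_iff.symm

theorem realize_uprod {k : ℕ} (φ : FO n k) (g : Fin k → ∀ i, (Ms i).World) :
    FO.Realize (UProd U Ms) φ (fun x => UProd.mk U Ms (g x)) ↔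
      ∀ᶠ i in (U : Filter ι), FO.Realize (Ms i) φ (fun x => g x i) := by
  have los := Language.Ultraproduct.boundedFormula_realize_cast (u := U) φ.toBoundedFormula
    Empty.elim g
  simp only [FO.realize_toBoundedFormula] at los
  exact (FO.realize_toBoundedFormula _ φ (fun i => UProd.mk U Ms i.elim) _).symm.trans
    ((Language.StrongHomClass.realize_boundedFormula (UProd.equivProduct U Ms) _).symm.trans los)

theorem sat_uprod_mk (φ : Formula) (f : ∀ i, (Ms i).World) :
    Sat (UProd U Ms) (UProd.mk U Ms f) φ ↔ ∀ᶠ i in (U : Filter ι), Sat (Ms i) (f i) φ := by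
  simpa only [realize_ST] using realize_uprod U Ms (ST n φ) fun _ => f

theorem uprod_R_mk (f : ∀ i, (Ms i).World) (g : Fin n → ∀ i, (Ms i).World) :
    (UProd U Ms).R (UProd.mk U Ms f) (fun j => UProd.mk U Ms (g j)) ↔
      ∀ᶠ i in (U : Filter ι), (Ms i).R (f i) (fun j => g j i) := by
  simpa [FO.Realize] using realize_uprod U Ms (FO.rel id) (Fin.cons f g)

theorem realize_uprod_const (M : NModel n) (w : M.World) (α : FO n 1) :
    FO.Realize (UProd U fun _ => M) α (fun _ => UProd.mk U _ fun _ => w) ↔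
      FO.Realize M α (fun _ => w) :=
  (realize_uprod U _ α fun _ _ => w).trans eventually_const

end Ultraproduct

section ModalTheory

def Formula.toNat : Formula → ℕ
  | .atom p => Nat.pair 0 p
  | .neg φ => Nat.pair 1 φ.toNat
  | .and φ ψ => Nat.pair 2 (Nat.pair φ.toNat ψ.toNat)
  | .box φ => Nat.pair 3 φ.toNat

theorem Formula.toNat_injective : Function.Injective Formula.toNat := by
  intro φ ψ h
  induction φ generalizing ψ <;> cases ψ <;> simp only [Formula.toNat, Nat.pair_eq_pair] at h <;>
    aesop

instance : Nonempty Formula := ⟨.atom 0⟩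

noncomputable def Formula.enum : ℕ → Formula := Function.invFun Formula.toNat

theorem Formula.enum_surjective : Function.Surjective Formula.enum :=
  Function.invFun_surjective Formula.toNat_injective

open Classical in
noncomputable def conjUpTo (S : Set Formula) (k : ℕ) : Formula :=
  conjList (((List.range k).map Formula.enum).filter (· ∈ S))

variable {n : ℕ}

theorem sat_conjUpTo (M : NModel n) (w : M.World) (S : Set Formula) (k : ℕ) :
    Sat M w (conjUpTo S k) ↔ ∀ m < k, Formula.enum m ∈ S → Sat M w (Formula.enum m) := by
  simp [conjUpTo, sat_conjList]

def modalTheory (M : NModel n) (w : M.World) : Set Formula := {φ | Sat M w φ}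

theorem modalTheory_eq_of_subset {A B : NModel n} {a : A.World} {b : B.World}
    (h : modalTheory A a ⊆ modalTheory B b) : modalTheory A a = modalTheory B b := by
  refine h.antisymm fun φ hφ => ?_
  by_contra hφ'
  exact h (show φ.neg ∈ modalTheory A a from hφ') hφ

theorem modalTheory_uprod_const {ι : Type} (U : Ultrafilter ι) (M : NModel n) (w : M.World) :
    modalTheory (UProd U fun _ => M) (UProd.mk U _ fun _ => w) = modalTheory M w :=
  Set.ext fun φ => (sat_uprod_mk U _ φ _).trans eventually_const

theorem eventually_ge_hyperfilter (k : ℕ) : ∀ᶠ i in hyperfilter ℕ, k ≤ i :=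
  (eventually_ge_atTop k).filter_mono Nat.hyperfilter_le_atTop

theorem subset_modalTheory_of_forall_sat_conjUpTo {Ms : ℕ → NModel n}
    {ws : ∀ i, (Ms i).World} {S : Set Formula} (h : ∀ i, Sat (Ms i) (ws i) (conjUpTo S i)) :
    S ⊆ modalTheory (UProd (hyperfilter ℕ) Ms) (UProd.mk _ Ms ws) := by
  intro φ hφ
  obtain ⟨m, rfl⟩ := Formula.enum_surjective φ
  refine (sat_uprod_mk _ Ms _ ws).2 ?_
  filter_upwards [eventually_ge_hyperfilter (m + 1)] with i hi
  exact (sat_conjUpTo _ _ _ _).1 (h i) m hi hφ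

end ModalTheory

section HennessyMilner

variable {n : ℕ} {Ms Ns : ℕ → NModel n}

theorem exists_R_forall_sat_of_forall_sat_dia (f : ∀ i, (Ms i).World) (δ : ℕ → Formula)
    (hδ : ∀ ⦃k m⦄, k ≤ m → ∀ (B : NModel n) (b : B.World),
      Sat B b (δ m) → Sat B b (δ k))
    (hdia : ∀ k, Sat (UProd (hyperfilter ℕ) Ms) (UProd.mk _ Ms f) (δ k).dia) :
    ∃ v, (UProd (hyperfilter ℕ) Ms).R (UProd.mk _ Ms f) v ∧
      ∀ j k, Sat (UProd (hyperfilter ℕ) Ms) (v j) (δ k) := by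
  classical
  let P i k := Sat (Ms i) (f i) (δ k).dia
  have hP k : ∀ᶠ i in hyperfilter ℕ, P i k := (sat_uprod_mk _ Ms _ f).1 (hdia k)
  -- At index `i`, realize the deepest requirement `δ (d i)` with `d i ≤ i`; as `i` grows along
  -- the nonprincipal ultrafilter, `d i` eventually exceeds every `k`.
  let d i := Nat.findGreatest (P i) i
  obtain ⟨g, hg⟩ : ∃ g : ∀ i, Fin n → (Ms i).World, ∀ᶠ i in hyperfilter ℕ,
      (Ms i).R (f i) (g i) ∧ ∀ j, Sat (Ms i) (g i j) (δ (d i)) :=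
    skolem.1 <| (hP 0).mono fun i hi => (sat_dia _ _ _).1 (Nat.findGreatest_spec (Nat.zero_le i) hi)
  refine ⟨fun j => UProd.mk _ Ms fun i => g i j,
    (uprod_R_mk _ Ms f _).2 (hg.mono fun i hi => hi.1), fun j k => (sat_uprod_mk _ Ms _ _).2 ?_⟩
  filter_upwards [hg, hP k, eventually_ge_hyperfilter k] with i hgi hki hik
  exact hδ (Nat.le_findGreatest hik hki) _ _ (hgi.2 j)

theorem exists_R_modalTheory_eq {x : (UProd (hyperfilter ℕ) Ms).World}
    {y : (UProd (hyperfilter ℕ) Ns).World} (hxy : modalTheory _ x = modalTheory _ y)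
    {v : Fin n → (UProd (hyperfilter ℕ) Ms).World} (hv : (UProd (hyperfilter ℕ) Ms).R x v) :
    ∃ v', (UProd (hyperfilter ℕ) Ns).R y v' ∧
      ∀ j, ∃ i, modalTheory _ (v i) = modalTheory _ (v' j) := by
  -- `δ k`: for some `i`, every formula among the first `k` that holds at `v i` holds here. A
  -- successor tuple of `y` whose components satisfy every `δ k` is matched with `v` by pigeonhole.
  let δ k := disjList ((List.finRange n).map fun i => conjUpTo (modalTheory _ (v i)) k)
  have sat_δ (B : NModel n) (b : B.World) k :
      Sat B b (δ k) ↔ ∃ i, Sat B b (conjUpTo (modalTheory _ (v i)) k) := by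
    simp [δ, sat_disjList]
  have hδ ⦃k m : ℕ⦄ (hkm : k ≤ m) (B : NModel n) (b : B.World) :
      Sat B b (δ m) → Sat B b (δ k) := by
    simp only [sat_δ, sat_conjUpTo]
    exact fun ⟨i, hi⟩ => ⟨i, fun l hl => hi l (hl.trans_le hkm)⟩
  have hdia k : Sat _ y (δ k).dia := by
    have : (δ k).dia ∈ modalTheory _ x := (sat_dia _ _ _).2
      ⟨v, hv, fun i => (sat_δ _ _ k).2 ⟨i, (sat_conjUpTo _ _ _ _).2 fun _ _ h => h⟩⟩
    rwa [hxy] at this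
  obtain ⟨f, rfl⟩ := UProd.mk_surjective _ _ y
  obtain ⟨v', hv', hv'δ⟩ := exists_R_forall_sat_of_forall_sat_dia f δ hδ hdia
  refine ⟨v', hv', fun j => ?_⟩
  by_contra! hne
  have hsep i : ∃ m, Sat _ (v i) (Formula.enum m) ∧ ¬ Sat _ (v' j) (Formula.enum m) := by
    obtain ⟨φ, hφ, hφ'⟩ := Set.not_subset.1 fun h => hne i (modalTheory_eq_of_subset h)
    obtain ⟨m, rfl⟩ := Formula.enum_surjective φ
    exact ⟨m, hφ, hφ'⟩
  choose m hm using hsep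
  obtain ⟨i, hi⟩ := (sat_δ _ _ _).1 (hv'δ j (Finset.univ.sup m + 1))
  exact (hm i).2 <| (sat_conjUpTo _ _ _ _).1 hi (m i)
    (Nat.lt_succ_of_le (Finset.le_sup (Finset.mem_univ i))) (hm i).1

theorem bisimilar_of_modalTheory_eq {x : (UProd (hyperfilter ℕ) Ms).World}
    {y : (UProd (hyperfilter ℕ) Ns).World} (hxy : modalTheory _ x = modalTheory _ y) :
    Bisimilar _ _ x y := by
  refine ⟨fun a b => modalTheory _ a = modalTheory _ b, ⟨⟨x, y, hxy⟩, ?_, ?_, ?_⟩, hxy⟩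
  · exact fun a b h p => Set.ext_iff.1 h (.atom p)
  · exact fun a b v h hv => exists_R_modalTheory_eq h hv
  · intro a b v' h hv'
    obtain ⟨v, hv, hvv'⟩ := exists_R_modalTheory_eq h.symm hv'
    exact ⟨v, hv, fun i => (hvv' i).imp fun _ => Eq.symm⟩

end HennessyMilner

section Characterization

variable {n : ℕ} {α : FO n 1}

def modalConsequences (α : FO n 1) : Set Formula :=
  {φ | ∀ (M : NModel n) (w : M.World), FO.Realize M α (fun _ => w) → Sat M w φ}

theorem realize_of_modalConsequences_subset (hα : BisimInvariant n α) {N : NModel n}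
    {v : N.World} (h : modalConsequences α ⊆ modalTheory N v) :
    FO.Realize N α (fun _ => v) := by
  have hcons k : ∃ (M : NModel n) (w : M.World),
      FO.Realize M α (fun _ => w) ∧ Sat M w (conjUpTo (modalTheory N v) k) := by
    by_contra! hk
    exact h (show (conjUpTo (modalTheory N v) k).neg ∈ modalConsequences α from hk)
      ((sat_conjUpTo _ _ _ _).2 fun _ _ h => h)
  choose Ms ws hαws hws using hcons
  have hTh : modalTheory _ (UProd.mk (hyperfilter ℕ) Ms ws) =
      modalTheory _ (UProd.mk (hyperfilter ℕ) (fun _ => N) fun _ => v) := by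
    rw [modalTheory_uprod_const,
      modalTheory_eq_of_subset (subset_modalTheory_of_forall_sat_conjUpTo hws)]
  obtain ⟨Z, hZ, hz⟩ := bisimilar_of_modalTheory_eq hTh
  exact (realize_uprod_const _ N v α).1 <|
    (hα _ _ Z _ _ hZ hz).1 ((realize_uprod _ _ α fun _ => ws).2 (.of_forall hαws))

theorem exists_conjUpTo_modalConsequences_imp (hα : BisimInvariant n α) :
    ∃ k, ∀ (M : NModel n) (w : M.World),
      Sat M w (conjUpTo (modalConsequences α) k) → FO.Realize M α (fun _ => w) := by
  by_contra! h
  choose Ns vs hvs hαvs using h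
  have := realize_of_modalConsequences_subset hα (subset_modalTheory_of_forall_sat_conjUpTo hvs)
  obtain ⟨i, hi⟩ := ((realize_uprod _ _ α fun _ => vs).1 this).exists
  exact hαvs i hi

end Characterization

theorem van_benthem_characterization_general (n : ℕ) (α : FO n 1) :
    BisimInvariant n α ↔
    ∃ φ : Formula, ∀ (M : NModel n) (w : M.World),
      FO.Realize M α (fun _ => w) ↔ FO.Realize M (ST n φ) (fun _ => w) := by
  constructor
  · intro hα
    obtain ⟨k, hk⟩ := exists_conjUpTo_modalConsequences_imp hα
    refine ⟨conjUpTo (modalConsequences α) k, fun M w => ?_⟩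
    rw [realize_ST]
    exact ⟨fun hw => (sat_conjUpTo _ _ _ _).2 fun _ _ hm => hm M w hw, hk M w⟩
  · rintro ⟨φ, hφ⟩ M N Z w v hZ hwv
    rw [hφ, hφ, realize_ST, realize_ST]
    exact sat_iff_of_isBisim hZ φ hwv

/-- van Benthem-style characterization of WAML^n over all n-models. -/
theorem van_benthem_characterization (n : ℕ) (hn : 1 ≤ n) (α : FO n 1) :
    BisimInvariant n α ↔
    ∃ φ : Formula, ∀ (M : NModel n) (w : M.World),
      FO.Realize M α (fun _ => w) ↔ FO.Realize M (ST n φ) (fun _ => w) :=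
  van_benthem_characterization_general n α

end WAML
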